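/- arXiv:2204.13459 — 3 statements merged into one kernel-verified Lean document; each statement's English description precedes it below -/
import Mathlib

section
/- Let M > 0 and D be reals with D ≥ ((√3−1)/2)·M. Let x_1 ≥ x_2 ≥ … ≥ x_n be real numbers with 0 < x_i ≤ M for all i, and suppose x_1 + … + x_n ≥ D. Let r be the least index such that x_1 + … + x_r ≥ D. Then x_1 + … + x_r ≤ (1+√3)·D. -/
/-!
If `r ≥ 2`, the last rejected packet is no heavier than the first, which is already part of the
prefix of weight `< D` before it, so at most `2D` is rejected. If `r = 1`, the single packet weighs
at most `M ≤ (1 + √3) D`, since `(√3 - 1) / 2` and `1 + √3` are reciprocal.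
-/

open Finset

theorem sum_range_add_two_le_two_mul {α : Type*} [Semiring α] [PartialOrder α]
    [IsOrderedRing α] {x : ℕ → α} {k : ℕ} (hnonneg : ∀ i ∈ range (k + 1), 0 ≤ x i)
    (hlast : x (k + 1) ≤ x 0) :
    ∑ i ∈ range (k + 2), x i ≤ 2 * ∑ i ∈ range (k + 1), x i := by
  have hfirst : x 0 ≤ ∑ i ∈ range (k + 1), x i :=
    single_le_sum hnonneg (mem_range.mpr k.succ_pos)
  rw [sum_range_succ _ (k + 1), two_mul]
  exact add_le_add_right (hlast.trans hfirst) _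

theorem le_one_add_sqrt_three_mul_of_le {M D : ℝ} (hD : (√3 - 1) / 2 * M ≤ D) :
    M ≤ (1 + √3) * D := by
  have h3 : √3 ^ 2 = 3 := Real.sq_sqrt (by norm_num)
  have hinv : (1 + √3) * ((√3 - 1) / 2) = 1 := by linear_combination h3 / 2
  calc M = (1 + √3) * ((√3 - 1) / 2 * M) := by rw [← mul_assoc, hinv, one_mul]
    _ ≤ (1 + √3) * D := mul_le_mul_of_nonneg_left hD (by positivity)

theorem rejectBig_weight_bound_general (M D : ℝ) (hM : 0 < M)
    (hD : ((Real.sqrt 3 - 1) / 2) * M ≤ D)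
    (n : ℕ) (x : ℕ → ℝ)
    (hpos : ∀ i < n, 0 < x i) (hle : ∀ i < n, x i ≤ M)
    (hsorted : ∀ i j, i ≤ j → j < n → x j ≤ x i)
    (r : ℕ) (hrn : r ≤ n)
    (hrmin : ∀ s < r, ∑ i ∈ Finset.range s, x i < D) :
    ∑ i ∈ Finset.range r, x i ≤ (1 + Real.sqrt 3) * D := by
  have hMD : M ≤ (1 + √3) * D := le_one_add_sqrt_three_mul_of_le hD
  have hDpos : 0 < D := pos_of_mul_pos_right (hM.trans_le hMD) (by positivity)
  rcases r with _ | _ | k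
  · simp only [range_zero, sum_empty]
    positivity
  · rw [sum_range_one]
    exact (hle 0 (by omega)).trans hMD
  · have htwo : (2 : ℝ) ≤ 1 + √3 := by linarith [Real.one_le_sqrt.mpr (by norm_num : (1 : ℝ) ≤ 3)]
    calc ∑ i ∈ range (k + 2), x i
        ≤ 2 * ∑ i ∈ range (k + 1), x i :=
          sum_range_add_two_le_two_mul (fun i hi => (hpos i (by rw [mem_range] at hi; omega)).le)
            (hsorted 0 (k + 1) (Nat.zero_le _) (by omega))
      _ ≤ 2 * D := by linarith [hrmin (k + 1) (by omega)]
      _ ≤ (1 + √3) * D := mul_le_mul_of_nonneg_right htwo hDpos.le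

/-- RejectBig rejects total weight at most (1+√3)·D: if x_1 ≥ … ≥ x_n are
weights in (0, M], their total is at least D ≥ ((√3−1)/2)·M, and r is the least
index with x_1 + … + x_r ≥ D, then x_1 + … + x_r ≤ (1+√3)·D. -/
theorem rejectBig_weight_bound (M D : ℝ) (hM : 0 < M)
    (hD : ((Real.sqrt 3 - 1) / 2) * M ≤ D)
    (n : ℕ) (x : ℕ → ℝ)
    (hpos : ∀ i < n, 0 < x i) (hle : ∀ i < n, x i ≤ M)
    (hsorted : ∀ i j, i ≤ j → j < n → x j ≤ x i)
    (hsum : D ≤ ∑ i ∈ Finset.range n, x i)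
    (r : ℕ) (hrn : r ≤ n)
    (hr : D ≤ ∑ i ∈ Finset.range r, x i)
    (hrmin : ∀ s < r, ∑ i ∈ Finset.range s, x i < D) :
    ∑ i ∈ Finset.range r, x i ≤ (1 + Real.sqrt 3) * D :=
  rejectBig_weight_bound_general M D hM hD n x hpos hle hsorted r hrn hrmin
end

section
/- Let M > 0 and D be reals with D ≥ ((√3−1)/2)·M. Let x_1 ≥ x_2 ≥ … ≥ x_n be real numbers with 0 < x_i ≤ M for all i, and let y_1, …, y_n be reals with 0 ≤ y_i ≤ x_i for all i, such that Σ_{i=1}^n (x_i − y_i) ≥ D. Let r be the least index such that x_1 + … + x_r ≥ D (such r exists since Σ x_i ≥ Σ (x_i − y_i) ≥ D). Then (1+√3)·Σ_{i=1}^n (x_i − y_i) ≥ Σ_{i=1}^r x_i. -/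
/-!
Since `r` is minimal, the first `r - 1` packets weigh less than `D`. For `r ≥ 2` the last
rejected packet is no heavier than the first one, so the rejected weight is below `2 D`;
for `r = 1` it is a single packet, of weight at most `M`. Both bounds are at most `(1 + √3) D`,
because `(1 + √3) (√3 - 1) / 2 = 1`, and `D` is at most the weight rejected by the LP.
-/

open Finset

section PrefixSums

variable {R : Type*} [Semiring R] [LinearOrder R] [IsOrderedRing R]

theorem sum_range_add_two_le_two_mul_s4 {x : ℕ → R} {k : ℕ}
    (hx : ∀ i < k + 1, 0 ≤ x i) (hanti : x (k + 1) ≤ x k) :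
    ∑ i ∈ range (k + 2), x i ≤ 2 * ∑ i ∈ range (k + 1), x i := by
  have hlast : x k ≤ ∑ i ∈ range (k + 1), x i :=
    single_le_sum (fun i hi => hx i (mem_range.mp hi)) (self_mem_range_succ k)
  rw [sum_range_succ _ (k + 1), two_mul]
  exact add_le_add le_rfl (hanti.trans hlast)

theorem sum_range_le_max_of_forall_sum_range_lt {x : ℕ → R} {r : ℕ} {M D : R} (hD : 0 ≤ D)
    (hx : ∀ i < r, 0 ≤ x i) (hxM : ∀ i < r, x i ≤ M)
    (hanti : ∀ i j, i ≤ j → j < r → x j ≤ x i)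
    (hmin : ∀ s < r, ∑ i ∈ range s, x i < D) :
    ∑ i ∈ range r, x i ≤ max M (2 * D) := by
  match r with
  | 0 => simpa using le_max_of_le_right (mul_nonneg zero_le_two hD)
  | 1 => simpa using le_max_of_le_left (hxM 0 one_pos)
  | k + 2 =>
    calc ∑ i ∈ range (k + 2), x i
        ≤ 2 * ∑ i ∈ range (k + 1), x i :=
          sum_range_add_two_le_two_mul_s4 (fun i hi => hx i (by omega))
            (hanti k (k + 1) k.le_succ (by omega))
      _ ≤ 2 * D := mul_le_mul_of_nonneg_left (hmin (k + 1) (by omega)).le zero_le_two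
      _ ≤ max M (2 * D) := le_max_right _ _

end PrefixSums

theorem one_add_sqrt_three_mul_sqrt_three_sub_one_div_two :
    (1 + Real.sqrt 3) * ((Real.sqrt 3 - 1) / 2) = 1 := by
  have h3 : Real.sqrt 3 * Real.sqrt 3 = 3 := Real.mul_self_sqrt (by norm_num)
  linear_combination h3 / 2

theorem two_le_one_add_sqrt_three : (2 : ℝ) ≤ 1 + Real.sqrt 3 := by
  have : (1 : ℝ) ≤ Real.sqrt 3 := Real.one_le_sqrt.mpr (by norm_num)
  linarith

theorem rejectBig_vs_lp_weight_general (M D : ℝ) (hM : 0 < M)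
    (hD : ((Real.sqrt 3 - 1) / 2) * M ≤ D)
    (n : ℕ) (x y : ℕ → ℝ)
    (hpos : ∀ i < n, 0 < x i) (hle : ∀ i < n, x i ≤ M)
    (hsorted : ∀ i j, i ≤ j → j < n → x j ≤ x i)
    (hsum : D ≤ ∑ i ∈ Finset.range n, (x i - y i))
    (r : ℕ) (hrn : r ≤ n)
    (hrmin : ∀ s < r, ∑ i ∈ Finset.range s, x i < D) :
    (1 + Real.sqrt 3) * ∑ i ∈ Finset.range n, (x i - y i) ≥
      ∑ i ∈ Finset.range r, x i := by
  have hc : 0 ≤ 1 + Real.sqrt 3 := zero_le_two.trans two_le_one_add_sqrt_three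
  have hD0 : 0 ≤ D := le_trans (mul_nonneg (by linarith [two_le_one_add_sqrt_three]) hM.le) hD
  have hprefix : ∑ i ∈ range r, x i ≤ max M (2 * D) :=
    sum_range_le_max_of_forall_sum_range_lt hD0
      (fun i hi => (hpos i (hi.trans_le hrn)).le) (fun i hi => hle i (hi.trans_le hrn))
      (fun i j hij hj => hsorted i j hij (hj.trans_le hrn)) hrmin
  have hM_le : M ≤ (1 + Real.sqrt 3) * D := by
    calc M = (1 + Real.sqrt 3) * ((Real.sqrt 3 - 1) / 2) * M := by
          rw [one_add_sqrt_three_mul_sqrt_three_sub_one_div_two, one_mul]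
      _ ≤ (1 + Real.sqrt 3) * D := by
          rw [mul_assoc]
          exact mul_le_mul_of_nonneg_left hD hc
  have h2D_le : 2 * D ≤ (1 + Real.sqrt 3) * D :=
    mul_le_mul_of_nonneg_right two_le_one_add_sqrt_three hD0
  calc ∑ i ∈ range r, x i ≤ max M (2 * D) := hprefix
    _ ≤ (1 + Real.sqrt 3) * D := max_le hM_le h2D_le
    _ ≤ (1 + Real.sqrt 3) * ∑ i ∈ range n, (x i - y i) :=
        mul_le_mul_of_nonneg_left hsum hc

/-- The weight rejected by RejectBig is at most (1+√3) times the weight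
rejected by the LP solution: (1+√3)·Σ (x_i − y_i) ≥ x_1 + … + x_r. -/
theorem rejectBig_vs_lp_weight (M D : ℝ) (hM : 0 < M)
    (hD : ((Real.sqrt 3 - 1) / 2) * M ≤ D)
    (n : ℕ) (x y : ℕ → ℝ)
    (hpos : ∀ i < n, 0 < x i) (hle : ∀ i < n, x i ≤ M)
    (hsorted : ∀ i j, i ≤ j → j < n → x j ≤ x i)
    (hy0 : ∀ i < n, 0 ≤ y i) (hyx : ∀ i < n, y i ≤ x i)
    (hsum : D ≤ ∑ i ∈ Finset.range n, (x i - y i))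
    (r : ℕ) (hrn : r ≤ n)
    (hr : D ≤ ∑ i ∈ Finset.range r, x i)
    (hrmin : ∀ s < r, ∑ i ∈ Finset.range s, x i < D) :
    (1 + Real.sqrt 3) * ∑ i ∈ Finset.range n, (x i - y i) ≥
      ∑ i ∈ Finset.range r, x i :=
  rejectBig_vs_lp_weight_general M D hM hD n x y hpos hle hsorted hsum r hrn hrmin
end

section
/- Let M > 0 and D be reals with D ≥ ((√3−1)/2)·M. Let x_1 ≥ x_2 ≥ … ≥ x_n be real numbers with 0 < x_i ≤ M for all i, and let y_1, …, y_n be reals with 0 ≤ y_i ≤ x_i for all i, such that Σ_{i=1}^n (x_i − y_i) ≥ D. Let r be the least index such that x_1 + … + x_r ≥ D. Then (1+√3)·Σ_{i=1}^n (x_i − y_i)/x_i ≥ r. -/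
/-!
Write `f i = (x i - y i) / x i ∈ [0, 1]` and `S = ∑ f i`. Since `x i ≤ M`, `S ≥ D / M ≥ (√3 - 1) / 2`,
which settles `r ≤ 1`. For `r ≥ 2`, `S ≥ r - 1`: fractions of total mass below `r - 1` can carry
at most the weight of the `r - 1` largest packets, which is less than `D ≤ ∑ f i * x i`.
Then `(1 + √3) (r - 1) ≥ r`.
-/

open Finset

theorem sum_mul_le_sum_range_of_threshold {n m : ℕ} (hmn : m ≤ n) {x f : ℕ → ℝ} {t : ℝ}
    (ht : 0 ≤ t) (hlo : ∀ i < m, t ≤ x i) (hhi : ∀ i, m ≤ i → i < n → x i ≤ t)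
    (hf0 : ∀ i < n, 0 ≤ f i) (hf1 : ∀ i < n, f i ≤ 1) (hF : ∑ i ∈ range n, f i ≤ m) :
    ∑ i ∈ range n, f i * x i ≤ ∑ i ∈ range m, x i := by
  have hhead : ∑ i ∈ range m, f i * (x i - t) ≤ ∑ i ∈ range m, (x i - t) :=
    sum_le_sum fun i hi => by
      have him := mem_range.1 hi
      exact mul_le_of_le_one_left (sub_nonneg.2 (hlo i him)) (hf1 i (by omega))
  have htail : ∑ i ∈ Ico m n, f i * (x i - t) ≤ 0 :=
    sum_nonpos fun i hi => by
      obtain ⟨hmi, hin⟩ := mem_Ico.1 hi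
      exact mul_nonpos_of_nonneg_of_nonpos (hf0 i hin) (sub_nonpos.2 (hhi i hmi hin))
  have hmass : t * ∑ i ∈ range n, f i ≤ t * m := mul_le_mul_of_nonneg_left hF ht
  calc ∑ i ∈ range n, f i * x i
      = ∑ i ∈ range m, f i * (x i - t) + ∑ i ∈ Ico m n, f i * (x i - t)
          + t * ∑ i ∈ range n, f i := by
        rw [sum_range_add_sum_Ico _ hmn, mul_sum, ← sum_add_distrib]
        exact sum_congr rfl fun i _ => by ring
    _ ≤ ∑ i ∈ range m, (x i - t) + 0 + t * m := by gcongr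
    _ = ∑ i ∈ range m, x i := by simp only [sum_sub_distrib, sum_const, card_range]; ring

theorem natCast_le_sum_of_sum_range_lt_sum_mul {n m : ℕ} (hmn : m ≤ n) {x f : ℕ → ℝ}
    (hx0 : ∀ i < n, 0 ≤ x i) (hsorted : ∀ i j, i ≤ j → j < n → x j ≤ x i)
    (hf0 : ∀ i < n, 0 ≤ f i) (hf1 : ∀ i < n, f i ≤ 1)
    (hlt : ∑ i ∈ range m, x i < ∑ i ∈ range n, f i * x i) :
    (m : ℝ) ≤ ∑ i ∈ range n, f i := by
  obtain _ | k := m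
  · simpa using sum_nonneg fun i hi => hf0 i (mem_range.1 hi)
  · by_contra! hF
    exact hlt.not_ge <| sum_mul_le_sum_range_of_threshold hmn (hx0 k (by omega))
      (fun i hi => hsorted i k (by omega) (by omega)) (fun i hki hin => hsorted k i (by omega) hin)
      hf0 hf1 (by exact_mod_cast hF.le)

theorem natCast_le_one_add_sqrt_three_mul {r : ℕ} {S : ℝ} (hS : (√3 - 1) / 2 ≤ S)
    (hr : (r : ℝ) - 1 ≤ S) : (r : ℝ) ≤ (1 + √3) * S := by
  have h3 : √3 * √3 = 3 := Real.mul_self_sqrt (by norm_num)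
  have h1 : 1 ≤ √3 := Real.one_le_sqrt.2 (by norm_num)
  rcases le_or_gt r 1 with hr1 | hr2
  · have : (r : ℝ) ≤ 1 := by exact_mod_cast hr1
    nlinarith
  · have : (2 : ℝ) ≤ r := by exact_mod_cast hr2
    nlinarith

theorem rejectBig_vs_lp_count_general (M D : ℝ) (hM : 0 < M)
    (hD : ((Real.sqrt 3 - 1) / 2) * M ≤ D)
    (n : ℕ) (x y : ℕ → ℝ)
    (hpos : ∀ i < n, 0 < x i) (hle : ∀ i < n, x i ≤ M)
    (hsorted : ∀ i j, i ≤ j → j < n → x j ≤ x i)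
    (hy0 : ∀ i < n, 0 ≤ y i) (hyx : ∀ i < n, y i ≤ x i)
    (hsum : D ≤ ∑ i ∈ Finset.range n, (x i - y i))
    (r : ℕ) (hrn : r ≤ n)
    (hrmin : ∀ s < r, ∑ i ∈ Finset.range s, x i < D) :
    (1 + Real.sqrt 3) * ∑ i ∈ Finset.range n, (x i - y i) / x i ≥ (r : ℝ) := by
  set f : ℕ → ℝ := fun i => (x i - y i) / x i
  have hf0 : ∀ i < n, 0 ≤ f i := fun i hi => div_nonneg (sub_nonneg.2 (hyx i hi)) (hpos i hi).le
  have hf1 : ∀ i < n, f i ≤ 1 := fun i hi => (div_le_one (hpos i hi)).2 (by linarith [hy0 i hi])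
  have hfx : ∑ i ∈ range n, f i * x i = ∑ i ∈ range n, (x i - y i) :=
    sum_congr rfl fun i hi => div_mul_cancel₀ _ (hpos i (mem_range.1 hi)).ne'
  have hmass : (√3 - 1) / 2 ≤ ∑ i ∈ range n, f i :=
    calc (√3 - 1) / 2 ≤ (∑ i ∈ range n, (x i - y i)) / M := by rw [le_div_iff₀ hM]; linarith
      _ = ∑ i ∈ range n, (x i - y i) / M := sum_div _ _ _
      _ ≤ ∑ i ∈ range n, f i := sum_le_sum fun i hi => by
          have hin := mem_range.1 hi
          exact div_le_div_of_nonneg_left (sub_nonneg.2 (hyx i hin)) (hpos i hin) (hle i hin)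
  have hcount : (r : ℝ) - 1 ≤ ∑ i ∈ range n, f i := by
    obtain _ | k := r
    · have := sum_nonneg fun i hi => hf0 i (mem_range.1 hi)
      push_cast
      linarith
    · have := natCast_le_sum_of_sum_range_lt_sum_mul (by omega) (fun i hi => (hpos i hi).le)
        hsorted hf0 hf1 (hfx ▸ (hrmin k (by omega)).trans_le hsum)
      push_cast
      linarith
  exact natCast_le_one_add_sqrt_three_mul hmass hcount

/-- The number of packets rejected by RejectBig is at most (1+√3) times the
total rejected fraction of the LP solution: (1+√3)·Σ (x_i − y_i)/x_i ≥ r. -/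
theorem rejectBig_vs_lp_count (M D : ℝ) (hM : 0 < M)
    (hD : ((Real.sqrt 3 - 1) / 2) * M ≤ D)
    (n : ℕ) (x y : ℕ → ℝ)
    (hpos : ∀ i < n, 0 < x i) (hle : ∀ i < n, x i ≤ M)
    (hsorted : ∀ i j, i ≤ j → j < n → x j ≤ x i)
    (hy0 : ∀ i < n, 0 ≤ y i) (hyx : ∀ i < n, y i ≤ x i)
    (hsum : D ≤ ∑ i ∈ Finset.range n, (x i - y i))
    (r : ℕ) (hrn : r ≤ n)
    (hr : D ≤ ∑ i ∈ Finset.range r, x i)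
    (hrmin : ∀ s < r, ∑ i ∈ Finset.range s, x i < D) :
    (1 + Real.sqrt 3) * ∑ i ∈ Finset.range n, (x i - y i) / x i ≥ (r : ℝ) :=
  rejectBig_vs_lp_count_general M D hM hD n x y hpos hle hsorted hy0 hyx hsum r hrn hrmin
end
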